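/- Let T be any infinite, locally finite rooted tree. Then the function λ ↦ C(λ,T) is right continuous on (0, +∞). -/

import Mathlib

open scoped Classical ENNReal
open Filter

/-- A rooted tree with vertex labels in `A`, modeled as a set of finite words over `A`
closed under taking initial segments. The root is the empty word `[]`, and the children
of a vertex `v` are the words `v ++ [a]` belonging to the tree. -/
structure RTree (A : Type*) where
  mem : Set (List A)
  root_mem : [] ∈ mem
  parent_mem : ∀ (v : List A) (a : A), v ++ [a] ∈ mem → v ∈ mem

namespace RTree

variable {A : Type*}

/-- The tree is locally finite: every vertex has finitely many children. -/
def LocFin (T : RTree A) : Prop := ∀ v ∈ T.mem, {a : A | v ++ [a] ∈ T.mem}.Finite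

/-- Number of children of a vertex. -/
noncomputable def numChildren (T : RTree A) (v : List A) : ℕ :=
  {a : A | v ++ [a] ∈ T.mem}.ncard

/-- Degree of a vertex (number of children, plus one for the parent except at the root). -/
noncomputable def degree (T : RTree A) (v : List A) : ℕ :=
  T.numChildren v + (if v = [] then 0 else 1)

/-- Number of vertices at generation `n`. -/
noncomputable def levelCard (T : RTree A) (n : ℕ) : ℕ :=
  {v ∈ T.mem | v.length = n}.ncard

/-- The subtree of descendants of `y`, rooted at `y`. -/
def subtree (T : RTree A) (y : List A) : RTree A where
  mem := insert [] {l : List A | y ++ l ∈ T.mem}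
  root_mem := Set.mem_insert _ _
  parent_mem := by
    intro v a hv
    rw [Set.mem_insert_iff] at hv
    rcases hv with h | h
    · exact absurd h (by simp)
    · exact Set.mem_insert_iff.mpr <| Or.inr <|
        T.parent_mem (y ++ v) a (by simpa [List.append_assoc] using h)

/-- One-step transition probabilities of the `λ`-biased random walk `RW_λ`:
from a non-root vertex with `k` children, move to the parent with probability
`1/(1+kλ)` and to each child with probability `λ/(1+kλ)`; from the root, move
to each of its children with equal probability. -/
noncomputable def step (T : RTree A) (lam : ℝ) (x y : List A) : ℝ :=
  if x ∈ T.mem ∧ y ∈ T.mem then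
    if ∃ a : A, y = x ++ [a] then
      if x = [] then 1 / (T.numChildren x : ℝ)
      else lam / (1 + (T.numChildren x : ℝ) * lam)
    else if x ≠ [] ∧ y = x.dropLast then 1 / (1 + (T.numChildren x : ℝ) * lam)
    else 0
  else 0

/-- Probability of a finite trajectory (product of one-step transition probabilities). -/
noncomputable def pathProb (T : RTree A) (lam : ℝ) : List (List A) → ℝ
  | [] => 1
  | [_] => 1
  | x :: y :: r => T.step lam x y * pathProb T lam (y :: r)

/-- Probability that the walk started at the root satisfies the constraint `P i` at
every time `0 ≤ i ≤ M`. -/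
noncomputable def cylProb (T : RTree A) (lam : ℝ) (M : ℕ) (P : ℕ → List A → Prop) : ℝ :=
  ∑' l : {l : List (List A) // l.length = M + 1 ∧ l.head? = some ([] : List A) ∧
      ∀ (i : ℕ) (h : i < l.length), P i (l.get ⟨i, h⟩)},
    T.pathProb lam l.1

/-- Probability that the walk started at the root never returns to the root
(the decreasing limit over `M` of the probabilities of no return up to time `M`). -/
noncomputable def escProb (T : RTree A) (lam : ℝ) : ℝ :=
  ⨅ M : ℕ, T.cylProb lam M fun i v => i ≠ 0 → v ≠ []

/-- Probability that the walk started at the root moves to `y` at its first step and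
never returns to the root. -/
noncomputable def escProbVia (T : RTree A) (lam : ℝ) (y : List A) : ℝ :=
  ⨅ M : ℕ, T.cylProb lam M fun i v => (i ≠ 0 → v ≠ []) ∧ (i = 1 → v = y)

/-- `RW_λ` is recurrent: started at the root, it returns to the root almost surely. -/
def Recurrent (T : RTree A) (lam : ℝ) : Prop := T.escProb lam = 0

/-- `RW_λ` is transient: started at the root, it fails to return with positive probability. -/
def Transient (T : RTree A) (lam : ℝ) : Prop := 0 < T.escProb lam

/-- Effective conductance `C(λ,T) = λ·deg(o)·P(no return to the root)`. -/
noncomputable def conductance (T : RTree A) (lam : ℝ) : ℝ :=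
  lam * (T.numChildren ([] : List A) : ℝ) * T.escProb lam

/-- Law of the limit walk: `phi T lam y` is the probability that the walk eventually
stays in the subtree above `y`, i.e. that the limit walk `ω_λ^∞` passes through `y`
(equivalently, `ω_λ^∞(i) = y.take i` for all `i ≤ y.length`). -/
noncomputable def phi (T : RTree A) (lam : ℝ) (y : List A) : ℝ :=
  ⨆ N : ℕ, ⨅ M : ℕ, T.cylProb lam (N + M) fun i v => N ≤ i → y <+: v

/-- An infinite simple path from the root. -/
def IsRay (T : RTree A) (r : ℕ → List A) : Prop :=
  r 0 = [] ∧ ∀ n, r n ∈ T.mem ∧ ∃ a : A, r (n + 1) = r n ++ [a]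

/-- An edge-cutset, each edge being recorded by its endpoint farther from the root:
every infinite simple path from the root uses one of these edges. -/
def IsECutset (T : RTree A) (c : Set (List A)) : Prop :=
  (∀ v ∈ c, v ∈ T.mem ∧ v ≠ []) ∧ ∀ r, T.IsRay r → ∃ n, r (n + 1) ∈ c

/-- A vertex-cutset: every infinite simple path from the root meets it. -/
def IsVCutset (T : RTree A) (c : Set (List A)) : Prop :=
  (∀ v ∈ c, v ∈ T.mem) ∧ ∀ r, T.IsRay r → ∃ n, r n ∈ c

/-- The branching number `br(T) = sup {λ ≥ 1 : inf over cutsets c of Σ_{e∈c} λ^{-|e|} > 0}`. -/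
noncomputable def br (T : RTree A) : ℝ :=
  sSup {lam : ℝ | 1 ≤ lam ∧
    0 < ⨅ (c : Set (List A)) (_ : T.IsECutset c),
      ∑' e : c, ENNReal.ofReal (lam⁻¹ ^ (e : List A).length)}

/-- The critical parameter `λ_c(T) = 1 / br(T)`. -/
noncomputable def lambdaC (T : RTree A) : ℝ := 1 / T.br

/-- Spherically symmetric tree: the degree of a vertex depends only on its generation. -/
def SphSymm (T : RTree A) : Prop :=
  ∀ v ∈ T.mem, ∀ w ∈ T.mem, v.length = w.length → T.numChildren v = T.numChildren w

/-- Uniformly transient tree. -/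
def UniformlyTransient (T : RTree A) : Prop :=
  ∀ lam : ℝ, T.lambdaC < lam → ∃ α > (0 : ℝ), ∀ v ∈ T.mem, α ≤ (T.subtree v).escProb lam

/-- Weakly uniformly transient tree. -/
def WeaklyUniformlyTransient (T : RTree A) : Prop :=
  ∃ c : ℕ → Set (List A),
    (∀ n, T.IsVCutset (c n) ∧ (c n).Finite) ∧
    (Pairwise fun i j => Disjoint (c i) (c j)) ∧
    ∀ lam : ℝ, T.lambdaC < lam → ∃ α > (0 : ℝ), ∀ n, ∀ v ∈ c n, α ≤ (T.subtree v).escProb lam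

/-- Vertices of the periodic tree `T^{∞,F}` obtained by repeatedly grafting a copy of
the finite tree `F` at every leaf: a word belongs to it iff it is a concatenation of
root-to-leaf words of `F` followed by a word of `F`. -/
inductive GraftMem (F : RTree A) : List A → Prop
  | base (v : List A) (hv : v ∈ F.mem) : GraftMem F v
  | graft (v w : List A) (hv : v ∈ F.mem) (hne : v ≠ []) (hleaf : F.numChildren v = 0)
      (hw : GraftMem F w) : GraftMem F (v ++ w)

/-- The periodic tree `T^{∞,F}`. -/
def periodicTree (F : RTree A) : RTree A where
  mem := {l | GraftMem F l}
  root_mem := GraftMem.base [] F.root_mem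
  parent_mem := by
    have H : ∀ l, GraftMem F l → ∀ (v : List A) (a : A), l = v ++ [a] → GraftMem F v := by
      intro l hl
      induction hl with
      | base v hv =>
          intro u a h
          subst h
          exact GraftMem.base u (F.parent_mem u a hv)
      | graft v w hv hne hleaf hw ih =>
          intro u a h
          rcases w.eq_nil_or_concat' with hwnil | ⟨w', b, hww⟩
          · subst hwnil
            rw [List.append_nil] at h
            subst h
            exact GraftMem.base u (F.parent_mem u a hv)
          · subst hww
            rw [← List.append_assoc] at h
            have h2 := congrArg List.dropLast h
            simp only [List.dropLast_concat] at h2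
            subst h2
            exact GraftMem.graft v w' hv hne hleaf (ih w' b rfl)
    exact fun v a hva => H (v ++ [a]) hva v a rfl

end RTree

/-- The class `A_m` of infinite, locally finite, spherically symmetric rooted trees
all of whose vertices have degree at most `m`. -/
def MemAm (m : ℕ) (T : RTree ℕ) : Prop :=
  T.mem.Infinite ∧ T.LocFin ∧ T.SphSymm ∧ ∀ v ∈ T.mem, T.degree v ≤ m

/-- The set `F_m` of effective-conductance functions of trees in `A_m`. -/
def Fm (m : ℕ) : Set (ℝ → ℝ) :=
  {f | ContinuousOn f (Set.Icc 0 1) ∧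
    ∃ T : RTree ℕ, MemAm m T ∧ ∀ lam ∈ Set.Ioc (0 : ℝ) 1, f lam = T.conductance lam}

namespace SAW

/-- Nearest-neighbour adjacency on `ℤ²`. -/
def Adj (x y : ℤ × ℤ) : Prop :=
  (x.1 = y.1 ∧ (x.2 = y.2 + 1 ∨ x.2 + 1 = y.2)) ∨
  (x.2 = y.2 ∧ (x.1 = y.1 + 1 ∨ x.1 + 1 = y.1))

/-- `l` is the list of successive positions, after the origin, of a self-avoiding
walk starting at the origin and staying in the region `S`. -/
def SAWIn (S : Set (ℤ × ℤ)) (l : List (ℤ × ℤ)) : Prop :=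
  List.Chain' Adj ((0, 0) :: l) ∧ ((0, 0) :: l).Nodup ∧ ∀ p ∈ l, p ∈ S

/-- The self-avoiding tree of the region `S`: its vertices are the finite
self-avoiding walks in `S` starting at the origin, two walks being adjacent when
one is a one-step extension of the other. -/
def sawTree (S : Set (ℤ × ℤ)) : RTree (ℤ × ℤ) where
  mem := {l | SAWIn S l}
  root_mem := by exact ⟨List.isChain_singleton _, List.nodup_singleton _, by simp⟩
  parent_mem := by
    intro v a hv
    obtain ⟨h1, h2, h3⟩ := hv
    have hpre : ((0, 0) :: v) <+: ((0, 0) :: (v ++ [a])) := ⟨[a], by simp⟩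
    refine ⟨?_, h2.sublist hpre.sublist, fun p hp => h3 p (by simp [hp])⟩
    have h1' : (((0, 0) :: v) ++ [a]).Chain' Adj := by simpa using h1
    exact (List.isChain_append.mp h1').1

/-- The upper half-plane `ℍ = ℤ × ℤ_{≥0}`. -/
def HH : Set (ℤ × ℤ) := {z | 0 ≤ z.2}

/-- The quadrant `ℚ = ℤ_{≥0} × ℤ_{≥0}`. -/
def QQ : Set (ℤ × ℤ) := {z | 0 ≤ z.1 ∧ 0 ≤ z.2}

/-- Number of self-avoiding walks of length `n` in `ℤ²` starting at the origin. -/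
noncomputable def cSAW (n : ℕ) : ℕ :=
  {l : List (ℤ × ℤ) | l.length = n ∧ SAWIn Set.univ l}.ncard

/-- The connective constant `μ = lim cₙ^{1/n}` of `ℤ²`; by Fekete's subadditive lemma
the limit exists and equals the infimum over `n ≥ 1` of `cₙ^{1/n}`. -/
noncomputable def mu : ℝ := ⨅ n : ℕ, (cSAW (n + 1) : ℝ) ^ (((n : ℝ) + 1)⁻¹)

/-- Endpoint in `ℤ²` of the finite self-avoiding walk recorded by `l`. -/
def endpt (l : List (ℤ × ℤ)) : ℤ × ℤ := l.getLast?.getD (0, 0)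

/-- `l` is a bridge of the horizontal strip `{z : 0 ≤ Im z ≤ ℓ}`: a self-avoiding
walk of the strip starting at the origin with `γ₁(0) < γ₁(i) ≤ γ₁(n)` for `1 ≤ i ≤ n`. -/
def IsStripBridge (width : ℕ) (l : List (ℤ × ℤ)) : Prop :=
  SAWIn {z : ℤ × ℤ | 0 ≤ z.2 ∧ z.2 ≤ (width : ℤ)} l ∧
  ∀ p ∈ l, 0 < p.1 ∧ p.1 ≤ (endpt l).1

/-- `p^{(ℓ)}_n`, the number of `n`-step bridges of the strip of width `ℓ`. -/
noncomputable def stripBridgeCount (width n : ℕ) : ℕ :=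
  {l : List (ℤ × ℤ) | l.length = n ∧ IsStripBridge width l}.ncard

end SAW

/-!
The escape probability is the decreasing limit, as `M → ∞`, of the probability of avoiding the
root up to time `M`. Each of these is a finite expression in `λ`, hence continuous, and it is
nondecreasing in `λ`: by induction on `M`, the probability of avoiding the root for `M` steps
increases along every edge pointing away from the root, so moving weight from the parent to the
children can only help. An infimum of continuous nondecreasing functions is right continuous.
-/

noncomputable def biasedMean {ι : Type*} (s : Finset ι) (lam a : ℝ) (b : ι → ℝ) : ℝ :=
  (a + lam * ∑ i ∈ s, b i) / (1 + s.card * lam)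

section BiasedMean

variable {ι : Type*} {s : Finset ι} {lam a c : ℝ} {b : ι → ℝ}

lemma biasedMean_le (hlam : 0 ≤ lam) (ha : a ≤ c) (hb : ∀ i ∈ s, b i ≤ c) :
    biasedMean s lam a b ≤ c := by
  have hsum : ∑ i ∈ s, b i ≤ s.card * c := by
    simpa using Finset.sum_le_sum hb
  rw [biasedMean, div_le_iff₀ (by positivity)]
  nlinarith

lemma le_biasedMean (hlam : 0 ≤ lam) (ha : c ≤ a) (hb : ∀ i ∈ s, c ≤ b i) :
    c ≤ biasedMean s lam a b := by
  have hsum : s.card * c ≤ ∑ i ∈ s, b i := by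
    simpa using Finset.sum_le_sum hb
  rw [biasedMean, le_div_iff₀ (by positivity)]
  nlinarith

lemma biasedMean_mono {a' : ℝ} {b' : ι → ℝ} (hlam : 0 ≤ lam) (ha : a ≤ a')
    (hb : ∀ i ∈ s, b i ≤ b' i) : biasedMean s lam a b ≤ biasedMean s lam a' b' := by
  unfold biasedMean
  gcongr
  exact hb _ ‹_›

lemma biasedMean_mono_weight {lam' : ℝ} (hlam : 0 ≤ lam) (hle : lam ≤ lam')
    (hb : ∀ i ∈ s, a ≤ b i) : biasedMean s lam a b ≤ biasedMean s lam' a b := by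
  have hlam' : 0 ≤ lam' := hlam.trans hle
  have hsum : s.card * a ≤ ∑ i ∈ s, b i := by
    simpa using Finset.sum_le_sum hb
  rw [biasedMean, biasedMean, div_le_div_iff₀ (by positivity) (by positivity)]
  nlinarith [mul_nonneg (sub_nonneg.mpr hle) (sub_nonneg.mpr hsum)]

end BiasedMean

theorem continuousWithinAt_Ici_ciInf {ι α β : Type*} [Nonempty ι] [TopologicalSpace α]
    [Preorder α]
    [ConditionallyCompleteLinearOrder β] [TopologicalSpace β] [OrderTopology β]
    {f : ι → α → β} {a : α} (hf : ∀ i, ContinuousAt (f i) a)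
    (hmono : ∀ i, MonotoneOn (f i) (Set.Ici a))
    (hbdd : ∀ x ∈ Set.Ici a, BddBelow (Set.range fun i => f i x)) :
    ContinuousWithinAt (fun x => ⨅ i, f i x) (Set.Ici a) a := by
  refine tendsto_order.2 ⟨fun b hb => ?_, fun b hb => ?_⟩
  · filter_upwards [self_mem_nhdsWithin] with x hx
    exact hb.trans_le <| ciInf_mono (hbdd a le_rfl) fun i => hmono i le_rfl hx hx
  · obtain ⟨i, hi⟩ := exists_lt_of_ciInf_lt hb
    filter_upwards [nhdsWithin_le_nhds ((hf i).eventually (gt_mem_nhds hi)),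
      self_mem_nhdsWithin] with x hlt hx
    exact (ciInf_le (hbdd x hx) i).trans_lt hlt

lemma forall_get_cons_iff {α : Type*} {x : α} {l : List α} {Q : ℕ → α → Prop}
    (hQ0 : Q 0 x) :
    (∀ (i : ℕ) (h : i < (x :: l).length), Q i ((x :: l).get ⟨i, h⟩))
      ↔ ∀ (i : ℕ) (h : i < l.length), Q (i + 1) (l.get ⟨i, h⟩) := by
  refine ⟨fun h i hi => by simpa using h (i + 1) (by simpa using hi), fun h i hi => ?_⟩
  cases i with
  | zero => simpa using hQ0
  | succ j => simpa using h j (by simpa using hi)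

namespace RTree

variable {A : Type*} {T : RTree A} {lam : ℝ}

noncomputable def childFinset (T : RTree A) (hlf : T.LocFin) (v : List A) : Finset A :=
  if h : v ∈ T.mem then (hlf v h).toFinset else ∅

lemma mem_childFinset {hlf : T.LocFin} {v : List A} {a : A} :
    a ∈ T.childFinset hlf v ↔ v ∈ T.mem ∧ v ++ [a] ∈ T.mem := by
  unfold childFinset
  split_ifs with h <;> simp [h]

lemma card_childFinset (hlf : T.LocFin) {v : List A} (hv : v ∈ T.mem) :
    (T.childFinset hlf v).card = T.numChildren v := by
  rw [childFinset, dif_pos hv, numChildren, Set.ncard_eq_toFinset_card _ (hlf v hv)]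

noncomputable def neighborFinset (T : RTree A) (hlf : T.LocFin) (v : List A) :
    Finset (List A) :=
  insert v.dropLast ((T.childFinset hlf v).image (v ++ [·]))

lemma step_eq_zero_of_not_mem_neighborFinset {hlf : T.LocFin} {x y : List A}
    (h : y ∉ T.neighborFinset hlf x) : T.step lam x y = 0 := by
  have hchild : ∀ a, y = x ++ [a] → x ∈ T.mem ∧ y ∈ T.mem → False := by
    rintro a rfl hmem
    exact h (Finset.mem_insert_of_mem (Finset.mem_image_of_mem _ (mem_childFinset.2 hmem)))
  unfold step
  split_ifs with hmem hch _ hpar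
  · exact (hch.elim fun a ha => hchild a ha hmem).elim
  · exact (hch.elim fun a ha => hchild a ha hmem).elim
  · exact (h (hpar.2 ▸ Finset.mem_insert_self _ _)).elim
  all_goals rfl

lemma step_of_not_mem {x y : List A} (h : x ∉ T.mem) : T.step lam x y = 0 := by
  rw [step, if_neg fun hxy => h hxy.1]

lemma step_nonneg (hlam : 0 ≤ lam) (x y : List A) : 0 ≤ T.step lam x y := by
  unfold step
  split_ifs <;> positivity

lemma dropLast_ne_append {v : List A} (hne : v ≠ []) (a : A) : v.dropLast ≠ v ++ [a] := by
  intro h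
  have := congrArg List.length h
  simp only [List.length_dropLast, List.length_append, List.length_singleton] at this
  have := List.length_pos_iff.2 hne
  omega

lemma dropLast_mem {v : List A} (hv : v ∈ T.mem) (hne : v ≠ []) : v.dropLast ∈ T.mem :=
  T.parent_mem _ (v.getLast hne) (by rwa [List.dropLast_append_getLast hne])

lemma step_dropLast {v : List A} (hv : v ∈ T.mem) (hne : v ≠ []) :
    T.step lam v v.dropLast = 1 / (1 + (T.numChildren v : ℝ) * lam) := by
  rw [step, if_pos ⟨hv, dropLast_mem hv hne⟩,
    if_neg fun ⟨a, ha⟩ => dropLast_ne_append hne a ha, if_pos ⟨hne, rfl⟩]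

lemma step_append_singleton {v : List A} {a : A} (hv : v ∈ T.mem) (hc : v ++ [a] ∈ T.mem)
    (hne : v ≠ []) : T.step lam v (v ++ [a]) = lam / (1 + (T.numChildren v : ℝ) * lam) := by
  rw [step, if_pos ⟨hv, hc⟩, if_pos ⟨a, rfl⟩, if_neg hne]

lemma step_nil_singleton {a : A} (hc : [a] ∈ T.mem) :
    T.step lam [] [a] = 1 / (T.numChildren [] : ℝ) := by
  rw [step, if_pos ⟨T.root_mem, hc⟩, if_pos ⟨a, rfl⟩, if_pos rfl]

lemma step_nil_nil : T.step lam [] [] = 0 := by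
  rw [step, if_pos ⟨T.root_mem, T.root_mem⟩, if_neg, if_neg]
  · simp
  · rintro ⟨a, ha⟩
    simp at ha

lemma tsum_step_mul (hlf : T.LocFin) (hlam : 0 ≤ lam) {v : List A} (hv : v ∈ T.mem)
    (hne : v ≠ []) (f : List A → ℝ) :
    ∑' y, T.step lam v y * f y
      = biasedMean (T.childFinset hlf v) lam (f v.dropLast) (fun a => f (v ++ [a])) := by
  rw [tsum_eq_sum (s := T.neighborFinset hlf v) fun y hy => by
    rw [step_eq_zero_of_not_mem_neighborFinset hy, zero_mul]]
  rw [neighborFinset, Finset.sum_insert (by simpa using fun a _ => (dropLast_ne_append hne a).symm),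
    Finset.sum_image (by simp), step_dropLast hv hne,
    Finset.sum_congr rfl fun a ha => by rw [step_append_singleton hv (mem_childFinset.1 ha).2 hne],
    ← Finset.mul_sum, biasedMean, card_childFinset hlf hv]
  have : 0 < 1 + (T.numChildren v : ℝ) * lam := by positivity
  field_simp

lemma tsum_step_nil_mul (hlf : T.LocFin) (f : List A → ℝ) :
    ∑' y, T.step lam [] y * f y
      = 1 / (T.numChildren [] : ℝ) * ∑ a ∈ T.childFinset hlf [], f [a] := by
  rw [tsum_eq_sum (s := T.neighborFinset hlf []) fun y hy => by
    rw [step_eq_zero_of_not_mem_neighborFinset hy, zero_mul]]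
  rw [neighborFinset, Finset.sum_insert (by simp), List.dropLast_nil, step_nil_nil, zero_mul,
    zero_add, Finset.sum_image (by simp), Finset.mul_sum]
  refine Finset.sum_congr rfl fun a ha => ?_
  rw [List.nil_append, step_nil_singleton (by simpa using (mem_childFinset.1 ha).2)]


/-- `T.avoidRootProb lam N v` is the probability that `RW_λ` started at `v` stays off the root
at times `0, …, N`. -/
noncomputable def avoidRootProb (T : RTree A) (lam : ℝ) : ℕ → List A → ℝ
  | 0, v => if v = [] then 0 else 1
  | N + 1, v => if v = [] then 0 else ∑' y, T.step lam v y * avoidRootProb T lam N y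

@[simp]
lemma avoidRootProb_nil (N : ℕ) : T.avoidRootProb lam N [] = 0 := by
  cases N <;> rfl

lemma avoidRootProb_zero_of_ne_nil {v : List A} (hne : v ≠ []) : T.avoidRootProb lam 0 v = 1 :=
  if_neg hne

lemma avoidRootProb_zero_le_one (v : List A) : T.avoidRootProb lam 0 v ≤ 1 := by
  unfold avoidRootProb
  split_ifs <;> norm_num

lemma avoidRootProb_succ_of_mem (hlf : T.LocFin) (hlam : 0 ≤ lam) {v : List A}
    (hv : v ∈ T.mem) (hne : v ≠ []) (N : ℕ) :
    T.avoidRootProb lam (N + 1) v = biasedMean (T.childFinset hlf v) lam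
      (T.avoidRootProb lam N v.dropLast) (fun a => T.avoidRootProb lam N (v ++ [a])) := by
  rw [avoidRootProb, if_neg hne, tsum_step_mul hlf hlam hv hne]

lemma avoidRootProb_succ_of_not_mem {v : List A} (hv : v ∉ T.mem) (N : ℕ) :
    T.avoidRootProb lam (N + 1) v = 0 := by
  simp [avoidRootProb, step_of_not_mem hv]

lemma avoidRootProb_nonneg (hlam : 0 ≤ lam) (N : ℕ) (v : List A) :
    0 ≤ T.avoidRootProb lam N v := by
  induction N generalizing v with
  | zero => unfold avoidRootProb; split_ifs <;> norm_num
  | succ N ih =>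
    unfold avoidRootProb
    split_ifs
    · exact le_rfl
    · exact tsum_nonneg fun y => mul_nonneg (step_nonneg hlam v y) (ih y)

lemma avoidRootProb_succ_le (hlf : T.LocFin) (hlam : 0 ≤ lam) (N : ℕ) (v : List A) :
    T.avoidRootProb lam (N + 1) v ≤ T.avoidRootProb lam N v := by
  induction N generalizing v with
  | zero =>
    rcases eq_or_ne v [] with rfl | hne
    · simp
    rw [avoidRootProb_zero_of_ne_nil hne]
    by_cases hv : v ∈ T.mem
    · rw [avoidRootProb_succ_of_mem hlf hlam hv hne]
      exact biasedMean_le hlam (avoidRootProb_zero_le_one _) fun _ _ => avoidRootProb_zero_le_one _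
    · rw [avoidRootProb_succ_of_not_mem hv]
      exact zero_le_one
  | succ N ih =>
    rcases eq_or_ne v [] with rfl | hne
    · simp
    by_cases hv : v ∈ T.mem
    · rw [avoidRootProb_succ_of_mem hlf hlam hv hne, avoidRootProb_succ_of_mem hlf hlam hv hne]
      exact biasedMean_mono hlam (ih _) fun _ _ => ih _
    · rw [avoidRootProb_succ_of_not_mem hv]
      exact avoidRootProb_nonneg hlam _ v

lemma avoidRootProb_dropLast_le (hlf : T.LocFin) (hlam : 0 ≤ lam) (N : ℕ) {v : List A}
    (hv : v ∈ T.mem) (hne : v ≠ []) :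
    T.avoidRootProb lam N v.dropLast ≤ T.avoidRootProb lam N v := by
  induction N generalizing v with
  | zero => rw [avoidRootProb_zero_of_ne_nil hne]; exact avoidRootProb_zero_le_one _
  | succ N ih =>
    -- with `w` the parent of `v`: the value at `(N + 1, w)` is at most that at `(N, w)`, which
    -- is at most that at `(N + 1, v)` because, by induction, every neighbour of `v` does at
    -- least as well as `w` at time `N`
    refine (avoidRootProb_succ_le hlf hlam N _).trans ?_
    rw [avoidRootProb_succ_of_mem hlf hlam hv hne]
    refine le_biasedMean hlam le_rfl fun a ha => (ih hv hne).trans ?_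
    simpa using ih (mem_childFinset.1 ha).2 (by simp)

lemma avoidRootProb_mono_lam (hlf : T.LocFin) {lam' : ℝ} (hlam : 0 ≤ lam) (hle : lam ≤ lam')
    (N : ℕ) (v : List A) : T.avoidRootProb lam N v ≤ T.avoidRootProb lam' N v := by
  have hlam' : 0 ≤ lam' := hlam.trans hle
  induction N generalizing v with
  | zero => rfl
  | succ N ih =>
    rcases eq_or_ne v [] with rfl | hne
    · simp
    by_cases hv : v ∈ T.mem
    · rw [avoidRootProb_succ_of_mem hlf hlam hv hne, avoidRootProb_succ_of_mem hlf hlam' hv hne]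
      refine (biasedMean_mono_weight hlam hle fun a ha => ?_).trans
        (biasedMean_mono hlam' (ih _) fun _ _ => ih _)
      refine (avoidRootProb_dropLast_le hlf hlam N hv hne).trans ?_
      simpa using avoidRootProb_dropLast_le hlf hlam N (mem_childFinset.1 ha).2 (by simp)
    · rw [avoidRootProb_succ_of_not_mem hv, avoidRootProb_succ_of_not_mem hv]

lemma continuousAt_avoidRootProb (hlf : T.LocFin) (hlam : 0 < lam) (N : ℕ) (v : List A) :
    ContinuousAt (fun x => T.avoidRootProb x N v) lam := by
  induction N generalizing v with
  | zero => exact continuousAt_const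
  | succ N ih =>
    rcases eq_or_ne v [] with rfl | hne
    · simpa using continuousAt_const
    by_cases hv : v ∈ T.mem
    · have hpos : 0 < 1 + ((T.childFinset hlf v).card : ℝ) * lam := by positivity
      refine ContinuousAt.congr ?_ <| (lt_mem_nhds hlam).mono fun x hx =>
        (avoidRootProb_succ_of_mem hlf hx.le hv hne N).symm
      exact ((ih _).add (continuousAt_id.mul (tendsto_finsetSum _ fun a _ => ih _))).div
        (continuousAt_const.add (continuousAt_const.mul continuousAt_id)) hpos.ne'
    · simpa [avoidRootProb_succ_of_not_mem hv] using continuousAt_const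


noncomputable def neighborWalks (T : RTree A) (hlf : T.LocFin) :
    ℕ → List A → Finset (List (List A))
  | 0, v => {[v]}
  | n + 1, v => (T.neighborFinset hlf v).biUnion fun y => (neighborWalks T hlf n y).image (v :: ·)

lemma head?_of_mem_neighborWalks {hlf : T.LocFin} {n : ℕ} {v : List A} {l : List (List A)}
    (hl : l ∈ T.neighborWalks hlf n v) : l.head? = some v := by
  cases n with
  | zero => simp_all [neighborWalks]
  | succ n =>
    simp only [neighborWalks, Finset.mem_biUnion, Finset.mem_image] at hl
    obtain ⟨_, _, l', _, rfl⟩ := hl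
    rfl

lemma mem_neighborWalks_of_pathProb_ne_zero (hlf : T.LocFin) :
    ∀ (n : ℕ) (v : List A) (l : List (List A)), l.length = n + 1 → l.head? = some v →
      T.pathProb lam l ≠ 0 → l ∈ T.neighborWalks hlf n v
  | 0, v, [x], _, hhead, _ => by simp_all [neighborWalks]
  | n + 1, v, x :: y :: r, hlen, hhead, hp => by
    obtain rfl : x = v := by simpa using hhead
    rw [pathProb, mul_ne_zero_iff] at hp
    simp only [neighborWalks, Finset.mem_biUnion, Finset.mem_image]
    refine ⟨y, ?_, y :: r,
      mem_neighborWalks_of_pathProb_ne_zero hlf n y _ (by simpa using hlen) rfl hp.2, rfl⟩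
    by_contra hy
    exact hp.1 (step_eq_zero_of_not_mem_neighborFinset hy)

noncomputable def cylProbFrom (T : RTree A) (lam : ℝ) (n : ℕ) (v : List A)
    (Q : ℕ → List A → Prop) : ℝ :=
  ∑' l : {l : List (List A) // l.length = n + 1 ∧ l.head? = some v ∧
      ∀ (i : ℕ) (h : i < l.length), Q i (l.get ⟨i, h⟩)}, T.pathProb lam l.1

lemma cylProb_eq_cylProbFrom (M : ℕ) (P : ℕ → List A → Prop) :
    T.cylProb lam M P = T.cylProbFrom lam M [] P := rfl

lemma cylProbFrom_eq_sum (hlf : T.LocFin) (n : ℕ) (v : List A) (Q : ℕ → List A → Prop) :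
    T.cylProbFrom lam n v Q = ∑ l ∈ T.neighborWalks hlf n v,
      if l.length = n + 1 ∧ l.head? = some v ∧
          ∀ (i : ℕ) (h : i < l.length), Q i (l.get ⟨i, h⟩)
      then T.pathProb lam l else 0 := by
  refine (tsum_subtype {l | _} (T.pathProb lam)).trans ?_
  rw [tsum_eq_sum (s := T.neighborWalks hlf n v) fun l hl => ?_]
  · simp only [Set.indicator_apply, Set.mem_ofPred_eq]
  · rw [Set.indicator_apply_eq_zero]
    exact fun hc => not_not.1 fun hp =>
      hl (mem_neighborWalks_of_pathProb_ne_zero hlf n v l hc.1 hc.2.1 hp)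

lemma cylProbFrom_eq_zero_of_not {n : ℕ} {v : List A} {Q : ℕ → List A → Prop} (hQ : ¬ Q 0 v) :
    T.cylProbFrom lam n v Q = 0 := by
  have : IsEmpty {l : List (List A) // l.length = n + 1 ∧ l.head? = some v ∧
      ∀ (i : ℕ) (h : i < l.length), Q i (l.get ⟨i, h⟩)} := by
    refine ⟨fun ⟨l, _, hhead, hQl⟩ => ?_⟩
    obtain ⟨r, rfl⟩ : ∃ r, l = v :: r := by
      cases l <;> simp_all
    exact hQ (hQl 0 (by simp))
  exact tsum_empty

lemma cylProbFrom_zero (hlf : T.LocFin) {v : List A} {Q : ℕ → List A → Prop} (hQ : Q 0 v) :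
    T.cylProbFrom lam 0 v Q = 1 := by
  rw [cylProbFrom_eq_sum hlf, neighborWalks, Finset.sum_singleton, if_pos]
  · rfl
  · refine ⟨rfl, rfl, fun i hi => ?_⟩
    obtain rfl : i = 0 := by simpa using hi
    exact hQ

lemma cylProbFrom_succ (hlf : T.LocFin) (n : ℕ) {v : List A} {Q : ℕ → List A → Prop}
    (hQ : Q 0 v) :
    T.cylProbFrom lam (n + 1) v Q
      = ∑' y, T.step lam v y * T.cylProbFrom lam n y fun i => Q (i + 1) := by
  rw [tsum_eq_sum (s := T.neighborFinset hlf v) fun y hy => by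
    rw [step_eq_zero_of_not_mem_neighborFinset hy, zero_mul]]
  rw [cylProbFrom_eq_sum hlf, neighborWalks, Finset.sum_biUnion]
  · refine Finset.sum_congr rfl fun y _ => ?_
    rw [Finset.sum_image (by simp), cylProbFrom_eq_sum hlf, Finset.mul_sum]
    refine Finset.sum_congr rfl fun l hl => ?_
    obtain ⟨r, rfl⟩ : ∃ r, l = y :: r := by
      have := head?_of_mem_neighborWalks hl
      cases l <;> simp_all
    simp only [forall_get_cons_iff hQ]
    simp only [List.length_cons, List.head?_cons, true_and,
      Nat.add_right_cancel_iff, pathProb, mul_ite, mul_zero]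
  · intro y₁ _ y₂ _ hne
    refine Finset.disjoint_left.2 fun l hl₁ hl₂ => ?_
    obtain ⟨l₁, hm₁, rfl⟩ := Finset.mem_image.1 hl₁
    obtain ⟨l₂, hm₂, hl⟩ := Finset.mem_image.1 hl₂
    obtain rfl := (List.cons_injective hl)
    have := (head?_of_mem_neighborWalks hm₁).symm.trans (head?_of_mem_neighborWalks hm₂)
    exact hne (Option.some_injective _ this)

lemma cylProbFrom_ne_nil_eq_avoidRootProb (hlf : T.LocFin) (n : ℕ) (v : List A) :
    T.cylProbFrom lam n v (fun _ z => z ≠ []) = T.avoidRootProb lam n v := by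
  rcases eq_or_ne v [] with rfl | hne
  · rw [avoidRootProb_nil, cylProbFrom_eq_zero_of_not (by simp)]
  induction n generalizing v with
  | zero => rw [cylProbFrom_zero hlf hne, avoidRootProb_zero_of_ne_nil hne]
  | succ n ih =>
    rw [cylProbFrom_succ hlf n hne, avoidRootProb, if_neg hne]
    refine tsum_congr fun y => congrArg (T.step lam v y * ·) ?_
    rcases eq_or_ne y [] with rfl | hy
    · rw [avoidRootProb_nil, cylProbFrom_eq_zero_of_not (by simp)]
    · exact ih y hy

lemma cylProb_noReturn_zero (hlf : T.LocFin) :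
    T.cylProb lam 0 (fun i v => i ≠ 0 → v ≠ []) = 1 := by
  rw [cylProb_eq_cylProbFrom]
  exact cylProbFrom_zero hlf fun h => (h rfl).elim

lemma cylProb_noReturn_succ (hlf : T.LocFin) (M : ℕ) :
    T.cylProb lam (M + 1) (fun i v => i ≠ 0 → v ≠ [])
      = 1 / (T.numChildren [] : ℝ) *
          ∑ a ∈ T.childFinset hlf [], T.avoidRootProb lam M [a] := by
  rw [cylProb_eq_cylProbFrom, cylProbFrom_succ hlf M fun h => (h rfl).elim,
    ← tsum_step_nil_mul (lam := lam) hlf]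
  simp only [ne_eq, Nat.add_eq_zero_iff, one_ne_zero, and_false, not_false_eq_true,
    forall_const, cylProbFrom_ne_nil_eq_avoidRootProb hlf]


lemma cylProb_noReturn_nonneg (hlf : T.LocFin) (hlam : 0 ≤ lam) (M : ℕ) :
    0 ≤ T.cylProb lam M (fun i v => i ≠ 0 → v ≠ []) := by
  cases M with
  | zero => rw [cylProb_noReturn_zero hlf]; exact zero_le_one
  | succ M =>
    rw [cylProb_noReturn_succ hlf]
    exact mul_nonneg (by positivity) (Finset.sum_nonneg fun _ _ => avoidRootProb_nonneg hlam M _)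

lemma monotoneOn_cylProb_noReturn (hlf : T.LocFin) (M : ℕ) :
    MonotoneOn (fun lam => T.cylProb lam M (fun i v => i ≠ 0 → v ≠ [])) (Set.Ici 0) := by
  intro lam hlam lam' _ hle
  cases M with
  | zero => simp only [cylProb_noReturn_zero hlf, le_refl]
  | succ M =>
    simp only [cylProb_noReturn_succ hlf]
    gcongr with a
    exact avoidRootProb_mono_lam hlf hlam hle M _

lemma continuousAt_cylProb_noReturn (hlf : T.LocFin) (hlam : 0 < lam) (M : ℕ) :
    ContinuousAt (fun x => T.cylProb x M (fun i v => i ≠ 0 → v ≠ [])) lam := by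
  cases M with
  | zero => simpa only [cylProb_noReturn_zero hlf] using continuousAt_const
  | succ M =>
    simp only [cylProb_noReturn_succ hlf]
    exact continuousAt_const.mul
      (tendsto_finsetSum _ fun a _ => continuousAt_avoidRootProb hlf hlam M [a])

lemma continuousWithinAt_escProb (hlf : T.LocFin) (hlam : 0 < lam) :
    ContinuousWithinAt T.escProb (Set.Ici lam) lam :=
  continuousWithinAt_Ici_ciInf (continuousAt_cylProb_noReturn hlf hlam)
    (fun M => (monotoneOn_cylProb_noReturn hlf M).mono (Set.Ici_subset_Ici.2 hlam.le))
    fun _ hx => ⟨0, Set.forall_mem_range.2 fun M =>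
      cylProb_noReturn_nonneg hlf (hlam.le.trans hx) M⟩

end RTree

theorem conductance_right_continuous_general (A : Type) (T : RTree A)
    (hlf : T.LocFin)
    (lam : ℝ) (hlam : 0 < lam) :
    ContinuousWithinAt (fun x => T.conductance x) (Set.Ici lam) lam :=
  (continuousWithinAt_id.mul continuousWithinAt_const).mul
    (T.continuousWithinAt_escProb hlf hlam)

/-- For any infinite, locally finite rooted tree `T`, the function
`λ ↦ C(λ,T)` is right continuous on `(0, +∞)`. -/
theorem conductance_right_continuous (A : Type) (T : RTree A)
    (hinf : T.mem.Infinite) (hlf : T.LocFin)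
    (lam : ℝ) (hlam : 0 < lam) :
    ContinuousWithinAt (fun x => T.conductance x) (Set.Ici lam) lam :=
  conductance_right_continuous_general A T hlf lam hlam
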